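/- (Limiting slope of distance-to-point restricted to a set) Let X ⊂ E be closed, x ∈ X, y ∉ X, u = (x-y)/|x-y|, and f = |· - y| + δ_X. Then the limiting slope satisfies |∇f|̄(x) = d(u, -N_X(x)) = d( (y-x)/|y-x| , N_X(x) ). -/

import Mathlib

/-!
A proximal normal `p` to `X` at `w` satisfies `⟪p, v - w⟫ ≤ σ ‖v - w‖²` on `X`; with the
supporting inequality for the norm this bounds the slope of `f = ‖· - y‖ + δ_X` at `w` by
`‖(w - y)/‖w - y‖ + p‖`, and passing to limits bounds the limiting slope by `d(u, -N_X(x))`.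

Conversely, if the slope at `w ∈ X` is below `r`, then `‖w - y‖ - ‖v - y‖ ≤ r ‖v - w‖` for `v ∈ X`
near `w`. Minimizing the smooth function `‖v - y‖ + r √(‖v - w‖² + η²) + ‖v - w‖² / 2` over `X`
near `w` gives, for small `η`, a point `v` close to `w` at which minus its gradient is a proximal
normal `q` with `‖(v - y)/‖v - y‖ + q‖ ≤ r + ‖v - w‖`. Letting `w → x` and extracting a convergent
subsequence of normals yields a limiting normal `p` at `x` with `‖u + p‖ ≤ r`.
-/

open Set Metric Filter
open scoped ENNReal Topology Classical

noncomputable section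

variable {E : Type*} [NormedAddCommGroup E] [InnerProductSpace ℝ E]

/-- The (possibly set-valued) nearest-point projection of `y` onto `X`. -/
def projSet (X : Set E) (y : E) : Set E := {x | x ∈ X ∧ dist y x = Metric.infDist y X}

/-- The proximal normal cone to `X` at `x`. -/
def proxNormalCone (X : Set E) (x : E) : Set E :=
  {v | ∃ (l : ℝ) (u : E), 0 ≤ l ∧ v = l • u ∧ x ∈ projSet X (x + u)}

/-- The limiting normal cone to `X` at `x`. -/
def limNormalCone (X : Set E) (x : E) : Set E :=
  {v | ∃ xs vs : ℕ → E, (∀ n, vs n ∈ proxNormalCone X (xs n)) ∧ (∀ n, xs n ∈ X) ∧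
    Tendsto xs atTop (𝓝 x) ∧ Tendsto vs atTop (𝓝 v)}

/-- The slope `|∇f|(x)`. -/
def slop {M : Type*} [MetricSpace M] (f : M → EReal) (x : M) : ℝ≥0∞ :=
  Filter.limsup (fun w => ENNReal.ofReal ((f x - f w).toReal / dist x w)) (𝓝[≠] x)

/-- The limiting slope. -/
def limSlope {M : Type*} [MetricSpace M] (f : M → EReal) (x : M) : ℝ≥0∞ :=
  Filter.liminf (slop f) (𝓝 x ⊓ Filter.comap f (𝓝 (f x)))

/-- The proximal subdifferential. -/
def proxSubdiff (f : E → EReal) (x : E) : Set E :=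
  {v | ∃ r > (0:ℝ), ∀ᶠ w in 𝓝 x,
    f x + (((inner ℝ v (w - x) : ℝ) - r * ‖w - x‖ ^ 2 : ℝ) : EReal) ≤ f w}

/-- The limiting subdifferential. -/
def limSubdiff (f : E → EReal) (x : E) : Set E :=
  {v | ∃ xs vs : ℕ → E, (∀ n, vs n ∈ proxSubdiff f (xs n)) ∧
    Tendsto xs atTop (𝓝 x) ∧ Tendsto (fun n => f (xs n)) atTop (𝓝 (f x)) ∧
    Tendsto vs atTop (𝓝 v)}

/-- Extended-real-valued indicator function of a set. -/
def eindicator {α : Type*} (X : Set α) (w : α) : EReal := if w ∈ X then 0 else ⊤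

/-- Intrinsic transversality (with proximal normal cones). -/
def IntrinsicallyTransversal (X Y : Set E) (z : E) (κ : ℝ) : Prop :=
  ∃ Z ∈ 𝓝 z, ∀ x ∈ X ∩ Yᶜ ∩ Z, ∀ y ∈ Y ∩ Xᶜ ∩ Z,
    κ ≤ max (Metric.infDist (‖x - y‖⁻¹ • (x - y)) (proxNormalCone Y y))
            (Metric.infDist (‖x - y‖⁻¹ • (x - y)) (-(proxNormalCone X x)))

/-- Strong intrinsic transversality (with limiting normal cones). -/
def StrongIntrinsicallyTransversal (X Y : Set E) (z : E) (κ : ℝ) : Prop :=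
  ∃ Z ∈ 𝓝 z, ∀ x ∈ X ∩ Yᶜ ∩ Z, ∀ y ∈ Y ∩ Xᶜ ∩ Z,
    κ ≤ max (Metric.infDist (‖x - y‖⁻¹ • (x - y)) (limNormalCone Y y))
            (Metric.infDist (‖x - y‖⁻¹ • (x - y)) (-(limNormalCone X x)))

/-- Strict intrinsic transversality (with slopes of the coupling function marginals). -/
def StrictIntrinsicallyTransversal (X Y : Set E) (z : E) (κ : ℝ) : Prop :=
  ∃ Z ∈ 𝓝 z, ∀ x ∈ X ∩ Yᶜ ∩ Z, ∀ y ∈ Y ∩ Xᶜ ∩ Z,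
    ENNReal.ofReal κ ≤ max (slop (fun w => (‖w - y‖ : EReal) + eindicator X w) x)
                           (slop (fun w => (‖x - w‖ : EReal) + eindicator Y w) y)

/-- Super-regularity of a set at a point. -/
def SuperRegular (X : Set E) (z : E) : Prop :=
  ∀ δ > (0:ℝ), ∃ r > (0:ℝ), ∀ w ∈ X ∩ ball z r, ∀ x ∈ X ∩ ball z r, w ≠ x →
    ∀ v ∈ limNormalCone X x, v ≠ 0 →
      Real.pi / 2 - δ ≤ InnerProductGeometry.angle (w - x) v

/-- Inherent transversality (via restricted normal cones, Bauschke–Luke–Phan–Wang). -/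
def InherentlyTransversal (X Y : Set E) (z : E) : Prop :=
  ∃ ε > (0:ℝ), ∃ Z ∈ 𝓝 z, ∀ x ∈ X ∩ Yᶜ ∩ Z, ∀ y ∈ Y ∩ Xᶜ ∩ Z,
    ∀ p ∈ projSet Y x, ∀ w ∈ projSet X y,
      ε ≤ InnerProductGeometry.angle (x - p) (w - y)

/-- Semi-algebraic subsets of `ℝⁿ`: finite unions of sets defined by finitely many
polynomial equalities and strict inequalities. -/
def IsSemialgebraic {n : ℕ} (s : Set (EuclideanSpace ℝ (Fin n))) : Prop :=
  ∃ (m : ℕ) (t : Fin m → Set (EuclideanSpace ℝ (Fin n))),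
    (∀ i, ∃ (k : ℕ) (p q : Fin k → MvPolynomial (Fin n) ℝ),
      t i = {x | (∀ j, MvPolynomial.eval (fun a => x a) (p j) = 0) ∧
                 (∀ j, 0 < MvPolynomial.eval (fun a => x a) (q j))}) ∧
    s = ⋃ i, t i

end

open scoped InnerProductSpace

section ProximalNormals

variable {E : Type*} [NormedAddCommGroup E] {X : Set E} {w q : E}

lemma mem_projSet_iff {z : E} : w ∈ projSet X z ↔ w ∈ X ∧ ∀ v ∈ X, dist z w ≤ dist z v := by
  refine ⟨fun ⟨hw, h⟩ => ⟨hw, fun v hv => h ▸ infDist_le_dist_of_mem hv⟩, fun ⟨hw, h⟩ => ?_⟩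
  exact ⟨hw, le_antisymm ((le_infDist ⟨w, hw⟩).2 h) (infDist_le_dist_of_mem hw)⟩

variable [InnerProductSpace ℝ E]

lemma norm_le_norm_sub_iff_two_inner_le (u d : E) : ‖u‖ ≤ ‖u - d‖ ↔ 2 * ⟪u, d⟫_ℝ ≤ ‖d‖ ^ 2 := by
  rw [← sq_le_sq₀ (norm_nonneg _) (norm_nonneg _), norm_sub_sq_real]
  constructor <;> intro h <;> linarith

lemma mem_proxNormalCone_iff :
    q ∈ proxNormalCone X w ↔ w ∈ X ∧ ∃ σ > 0, ∀ v ∈ X, ⟪q, v - w⟫_ℝ ≤ σ * ‖v - w‖ ^ 2 := by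
  have hdist : ∀ u v : E, dist (w + u) w ≤ dist (w + u) v ↔ 2 * ⟪u, v - w⟫_ℝ ≤ ‖v - w‖ ^ 2 := by
    intro u v
    rw [dist_eq_norm, dist_eq_norm, add_sub_cancel_left, show w + u - v = u - (v - w) by abel,
      norm_le_norm_sub_iff_two_inner_le]
  constructor
  · rintro ⟨l, u, hl, rfl, hproj⟩
    obtain ⟨hw, hnear⟩ := mem_projSet_iff.1 hproj
    refine ⟨hw, l / 2 + 1, by positivity, fun v hv => ?_⟩
    have h := mul_le_mul_of_nonneg_left ((hdist u v).1 (hnear v hv)) hl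
    rw [real_inner_smul_left]
    nlinarith [sq_nonneg ‖v - w‖]
  · rintro ⟨hw, σ, hσ, h⟩
    refine ⟨2 * σ, (2 * σ)⁻¹ • q, by positivity, by rw [smul_smul, mul_inv_cancel₀ (by positivity),
      one_smul], mem_projSet_iff.2 ⟨hw, fun v hv => (hdist _ v).2 ?_⟩⟩
    rw [real_inner_smul_left, ← mul_assoc, show 2 * (2 * σ)⁻¹ = σ⁻¹ by field_simp,
      inv_mul_le_iff₀ hσ]
    exact h v hv

/-- Far from `w` the linear term `⟪q, v - w⟫` is dominated by `‖v - w‖ ^ 2` once `σ` is enlarged. -/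
lemma mem_proxNormalCone_of_eventually (hw : w ∈ X) {σ : ℝ}
    (h : ∀ᶠ v in 𝓝[X] w, ⟪q, v - w⟫_ℝ ≤ σ * ‖v - w‖ ^ 2) : q ∈ proxNormalCone X w := by
  obtain ⟨ρ, hρ, hball⟩ := Metric.mem_nhdsWithin_iff.1 h
  refine mem_proxNormalCone_iff.2 ⟨hw, |σ| + ‖q‖ / ρ + 1, by positivity, fun v hv => ?_⟩
  have hσ : σ * ‖v - w‖ ^ 2 ≤ |σ| * ‖v - w‖ ^ 2 := by gcongr; exact le_abs_self σ
  have hq : 0 ≤ ‖q‖ / ρ * ‖v - w‖ ^ 2 := by positivity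
  rcases lt_or_ge ‖v - w‖ ρ with hnear | hfar
  · have : ⟪q, v - w⟫_ℝ ≤ σ * ‖v - w‖ ^ 2 := hball ⟨by rwa [mem_ball, dist_eq_norm], hv⟩
    nlinarith [sq_nonneg ‖v - w‖]
  · have hlin : ⟪q, v - w⟫_ℝ ≤ ‖q‖ / ρ * ‖v - w‖ ^ 2 := by
      calc ⟪q, v - w⟫_ℝ ≤ ‖q‖ * ‖v - w‖ := real_inner_le_norm _ _
        _ ≤ ‖q‖ * (‖v - w‖ / ρ * ‖v - w‖) := by
          gcongr; exact le_mul_of_one_le_left (norm_nonneg _) ((one_le_div hρ).2 hfar)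
        _ = ‖q‖ / ρ * ‖v - w‖ ^ 2 := by ring
    nlinarith [sq_nonneg ‖v - w‖, abs_nonneg σ]

lemma IsLocalMinOn.neg_mem_proxNormalCone {φ : E → ℝ} {a : E} {C : ℝ}
    (hmin : IsLocalMinOn φ X w) (hw : w ∈ X)
    (hφ : ∀ v, φ v ≤ φ w + ⟪a, v - w⟫_ℝ + C * ‖v - w‖ ^ 2) : -a ∈ proxNormalCone X w :=
  mem_proxNormalCone_of_eventually hw (σ := C) <| Filter.Eventually.mono hmin fun v hv => by
    rw [inner_neg_left]; linarith [hφ v]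

end ProximalNormals

section SmoothNorm

variable {E : Type*} [NormedAddCommGroup E]

lemma Real.sqrt_le_sqrt_add_div {a b : ℝ} (ha : 0 < a) (hb : 0 ≤ b) :
    √b ≤ √a + (b - a) / (2 * √a) := by
  have hsa := Real.sqrt_pos.2 ha
  rw [← sub_le_iff_le_add', le_div_iff₀ (by positivity)]
  nlinarith [sq_nonneg (√b - √a), Real.sq_sqrt hb, Real.sq_sqrt ha.le]

/-- For `η ≠ 0` this is smooth, with gradient `(smoothNorm η u)⁻¹ • u` of norm `< 1`. -/
noncomputable def smoothNorm (η : ℝ) (u : E) : ℝ := √(‖u‖ ^ 2 + η ^ 2)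

lemma smoothNorm_zero_left (u : E) : smoothNorm 0 u = ‖u‖ := by
  simp [smoothNorm]

lemma smoothNorm_zero_right (η : ℝ) : smoothNorm η (0 : E) = |η| := by
  simp [smoothNorm, Real.sqrt_sq_eq_abs]

lemma smoothNorm_pos {η : ℝ} (hη : η ≠ 0) (u : E) : 0 < smoothNorm η u :=
  Real.sqrt_pos.2 (by positivity)

lemma norm_le_smoothNorm (η : ℝ) (u : E) : ‖u‖ ≤ smoothNorm η u :=
  Real.le_sqrt_of_sq_le (by nlinarith [sq_nonneg η])

variable [InnerProductSpace ℝ E]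

lemma smoothNorm_add_le {η : ℝ} {u : E} (hu : 0 < smoothNorm η u) (h : E) :
    smoothNorm η (u + h) ≤
      smoothNorm η u + ⟪(smoothNorm η u)⁻¹ • u, h⟫_ℝ + ‖h‖ ^ 2 / (2 * smoothNorm η u) := by
  have hpos : 0 < ‖u‖ ^ 2 + η ^ 2 := Real.sqrt_pos.1 hu
  calc smoothNorm η (u + h)
      ≤ smoothNorm η u + (‖u + h‖ ^ 2 + η ^ 2 - (‖u‖ ^ 2 + η ^ 2)) / (2 * smoothNorm η u) :=
        Real.sqrt_le_sqrt_add_div hpos (by positivity)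
    _ = _ := by
        rw [norm_add_sq_real, real_inner_smul_left]
        field_simp
        ring

lemma norm_add_le_norm_add_inner_add {u : E} (hu : u ≠ 0) (h : E) :
    ‖u + h‖ ≤ ‖u‖ + ⟪‖u‖⁻¹ • u, h⟫_ℝ + ‖h‖ ^ 2 / (2 * ‖u‖) := by
  simpa only [smoothNorm_zero_left] using
    smoothNorm_add_le (η := 0) (by rwa [smoothNorm_zero_left, norm_pos_iff]) h

lemma norm_add_inner_le_norm_add (u h : E) : ‖u‖ + ⟪‖u‖⁻¹ • u, h⟫_ℝ ≤ ‖u + h‖ := by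
  rcases eq_or_ne u 0 with rfl | hu
  · simp
  have hunit : ‖‖u‖⁻¹ • u‖ = 1 := norm_smul_inv_norm hu
  calc ‖u‖ + ⟪‖u‖⁻¹ • u, h⟫_ℝ = ⟪‖u‖⁻¹ • u, u + h⟫_ℝ := by
        rw [inner_add_right, real_inner_smul_left, real_inner_smul_left, real_inner_self_eq_norm_sq]
        field_simp [norm_ne_zero_iff.2 hu]
    _ ≤ ‖u + h‖ := by simpa [hunit] using real_inner_le_norm (‖u‖⁻¹ • u) (u + h)

end SmoothNorm

section Slope

variable {M : Type*} [MetricSpace M] {f : M → EReal} {w : M}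

lemma slop_le_ofReal {L : ℝ}
    (h : ∀ ε > 0, ∀ᶠ v in 𝓝[≠] w, (f w - f v).toReal ≤ (L + ε) * dist w v) :
    slop f w ≤ ENNReal.ofReal L := by
  refine ENNReal.le_of_forall_pos_le_add fun ε hε _ => ?_
  calc slop f w ≤ ENNReal.ofReal (L + ε) := by
        refine Filter.limsup_le_of_le (by isBoundedDefault) ?_
        filter_upwards [h ε hε, self_mem_nhdsWithin] with v hv hvw
        exact ENNReal.ofReal_le_ofReal ((div_le_iff₀ (dist_pos.2 (Ne.symm hvw))).2 hv)
    _ ≤ ENNReal.ofReal L + ε := by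
        rw [← ENNReal.ofReal_coe_nnreal (p := ε)]; exact ENNReal.ofReal_add_le

lemma eventually_toReal_sub_lt_of_slop_lt {r : ℝ} (h : slop f w < ENNReal.ofReal r) :
    ∀ᶠ v in 𝓝[≠] w, (f w - f v).toReal < r * dist w v := by
  filter_upwards [Filter.eventually_lt_of_limsup_lt h, self_mem_nhdsWithin] with v hv hvw
  exact (div_lt_iff₀ (dist_pos.2 (Ne.symm hvw))).1 (ENNReal.ofReal_lt_ofReal_iff'.1 hv).1

end Slope

section Indicator

variable {α : Type*} {X : Set α} {w : α}

@[simp] lemma eindicator_of_mem (hw : w ∈ X) : eindicator X w = 0 := if_pos hw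

@[simp] lemma eindicator_of_notMem (hw : w ∉ X) : eindicator X w = ⊤ := if_neg hw

/-- `h + δ_X` is finite exactly on `X`, so approaching its finite value at `x` forces the points
into `X`. -/
lemma nhds_inf_comap_add_eindicator [TopologicalSpace α] {h : α → ℝ} {x : α} (hx : x ∈ X)
    (hh : ContinuousWithinAt h X x) :
    𝓝 x ⊓ comap (fun w => (h w : EReal) + eindicator X w) (𝓝 ((h x : EReal) + eindicator X x))
      = 𝓝[X] x := by
  have hfin : ∀ w ∈ X, (h w : EReal) + eindicator X w = h w := fun w hw => by
    rw [eindicator_of_mem hw, add_zero]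
  refine le_antisymm (le_inf inf_le_left (inf_le_right.trans ?_)) ?_
  · refine le_principal_iff.2 (mem_comap.2 ⟨Iio ⊤, Iio_mem_nhds ?_, fun w hw => ?_⟩)
    · rw [hfin x hx]; exact EReal.coe_lt_top _
    · by_contra hwX
      simp [hwX] at hw
  · refine le_inf nhdsWithin_le_nhds (tendsto_iff_comap.1 ?_)
    rw [hfin x hx]
    exact (continuous_coe_real_ereal.continuousAt.comp_continuousWithinAt hh).congr'
      (eventually_nhdsWithin_of_forall fun w hw => (hfin w hw).symm)

lemma limSlope_add_eindicator {M : Type*} [MetricSpace M] {X : Set M} {h : M → ℝ} {x : M}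
    (hx : x ∈ X) (hh : ContinuousWithinAt h X x) :
    limSlope (fun w => (h w : EReal) + eindicator X w) x =
      liminf (slop fun w => (h w : EReal) + eindicator X w) (𝓝[X] x) := by
  rw [limSlope, nhds_inf_comap_add_eindicator hx hh]

end Indicator

section RestrictedDist

variable {E : Type*} [NormedAddCommGroup E] {X : Set E} {y w : E}

noncomputable def restrictedDist (X : Set E) (y w : E) : EReal := ‖w - y‖ + eindicator X w

lemma restrictedDist_of_mem (hw : w ∈ X) : restrictedDist X y w = ‖w - y‖ := by
  rw [restrictedDist, eindicator_of_mem hw, add_zero]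

lemma restrictedDist_of_notMem (hw : w ∉ X) : restrictedDist X y w = ⊤ := by
  rw [restrictedDist, eindicator_of_notMem hw, EReal.add_top_of_ne_bot (EReal.coe_ne_bot _)]

lemma toReal_restrictedDist_sub (hw : w ∈ X) (v : E) :
    (restrictedDist X y w - restrictedDist X y v).toReal =
      if v ∈ X then ‖w - y‖ - ‖v - y‖ else 0 := by
  split_ifs with hv
  · rw [restrictedDist_of_mem hw, restrictedDist_of_mem hv, ← EReal.coe_sub, EReal.toReal_coe]
  · simp [restrictedDist_of_mem hw, restrictedDist_of_notMem hv]

lemma eventually_restrictedDist_growth_of_slop_lt {r : ℝ} (hw : w ∈ X)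
    (h : slop (restrictedDist X y) w < ENNReal.ofReal r) :
    ∀ᶠ v in 𝓝[X] w, ‖w - y‖ - ‖v - y‖ ≤ r * ‖v - w‖ := by
  obtain ⟨ρ, hρ, hball⟩ := Metric.mem_nhdsWithin_iff.1 (eventually_toReal_sub_lt_of_slop_lt h)
  filter_upwards [inter_mem_nhdsWithin X (ball_mem_nhds w hρ)] with v ⟨hvX, hvρ⟩
  rcases eq_or_ne v w with rfl | hvw
  · simp
  have : (restrictedDist X y w - restrictedDist X y v).toReal < r * dist w v := hball ⟨hvρ, hvw⟩
  rw [toReal_restrictedDist_sub hw, if_pos hvX, dist_eq_norm'] at this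
  exact this.le

variable [InnerProductSpace ℝ E]

lemma slop_restrictedDist_le {p : E} (hw : w ∈ X) (hp : p ∈ proxNormalCone X w) :
    slop (restrictedDist X y) w ≤ ENNReal.ofReal ‖‖w - y‖⁻¹ • (w - y) + p‖ := by
  obtain ⟨-, σ, hσ, hprox⟩ := mem_proxNormalCone_iff.1 hp
  set g := ‖w - y‖⁻¹ • (w - y)
  have hgrowth : ∀ v ∈ X, ‖w - y‖ - ‖v - y‖ ≤ ‖g + p‖ * ‖v - w‖ + σ * ‖v - w‖ ^ 2 := by
    intro v hv
    have hlin := norm_add_inner_le_norm_add (w - y) (v - w)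
    rw [sub_add_sub_cancel'] at hlin
    have hcs := neg_le_of_abs_le (abs_real_inner_le_norm (g + p) (v - w))
    rw [inner_add_left] at hcs
    linarith [hprox v hv]
  refine slop_le_ofReal fun ε hε => ?_
  filter_upwards [mem_nhdsWithin_of_mem_nhds (ball_mem_nhds w (div_pos hε hσ))] with v hv
  rw [toReal_restrictedDist_sub hw]
  split_ifs with hvX
  · rw [mem_ball, dist_eq_norm, lt_div_iff₀ hσ] at hv
    rw [dist_eq_norm', add_mul]
    nlinarith [hgrowth v hvX, norm_nonneg (v - w)]
  · positivity

end RestrictedDist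

section Penalty

variable {E : Type*} [NormedAddCommGroup E] {X : Set E} {y w : E} {r η : ℝ}

/-- Minimizing this over `X` near `w` produces the nearby proximal normal: the term
`r * smoothNorm η (· - w)` is a smooth stand-in for `r * ‖· - w‖` with gradient of norm `< r`,
and the quadratic term localizes the minimizer. -/
noncomputable def localPenalty (y w : E) (r η : ℝ) (v : E) : ℝ :=
  ‖v - y‖ + r * smoothNorm η (v - w) + ‖v - w‖ ^ 2 / 2

lemma continuous_localPenalty : Continuous (localPenalty y w r η) := by
  unfold localPenalty smoothNorm; fun_prop

lemma exists_isLocalMinOn_localPenalty [ProperSpace E] (hX : IsClosed X) (hw : w ∈ X)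
    (hr : 0 ≤ r) (hη : 0 ≤ η) {ρ : ℝ} (hρ : 0 < ρ)
    (hgrowth : ∀ v ∈ X, ‖v - w‖ ≤ ρ → ‖w - y‖ - ‖v - y‖ ≤ r * ‖v - w‖)
    (hsmall : 2 * r * η < ρ ^ 2) :
    ∃ v ∈ X, ‖v - w‖ ^ 2 ≤ 2 * r * η ∧ IsLocalMinOn (localPenalty y w r η) X v := by
  obtain ⟨v, ⟨hvX, hvρ⟩, hmin⟩ := ((isCompact_closedBall w ρ).inter_left hX).exists_isMinOn
    ⟨w, hw, mem_closedBall_self hρ.le⟩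
    (continuous_localPenalty (y := y) (r := r) (η := η)).continuousOn
  have hvw : ‖v - w‖ ^ 2 ≤ 2 * r * η := by
    have hle := isMinOn_iff.1 hmin w ⟨hw, mem_closedBall_self hρ.le⟩
    have hv := hgrowth v hvX (by rwa [mem_closedBall, dist_eq_norm] at hvρ)
    have hs := mul_le_mul_of_nonneg_left (norm_le_smoothNorm η (v - w)) hr
    simp only [localPenalty] at hle
    rw [sub_self, smoothNorm_zero_right, abs_of_nonneg hη, norm_zero] at hle
    nlinarith
  refine ⟨v, hvX, hvw, ?_⟩
  have hvρ' : v ∈ ball w ρ := by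
    rw [mem_ball, dist_eq_norm, ← pow_lt_pow_iff_left₀ (norm_nonneg _) hρ.le two_ne_zero]
    linarith
  filter_upwards [inter_mem_nhdsWithin X (isOpen_ball.mem_nhds hvρ')] with v' ⟨hv'X, hv'ρ⟩
  exact isMinOn_iff.1 hmin v' ⟨hv'X, ball_subset_closedBall hv'ρ⟩

variable [InnerProductSpace ℝ E]

lemma localPenalty_le_add_inner (hr : 0 ≤ r) (hη : η ≠ 0) {v : E} (hvy : v ≠ y) :
    ∃ C, ∀ v', localPenalty y w r η v' ≤ localPenalty y w r η v +
      ⟪‖v - y‖⁻¹ • (v - y) + r • (smoothNorm η (v - w))⁻¹ • (v - w) + (v - w), v' - v⟫_ℝ +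
      C * ‖v' - v‖ ^ 2 := by
  refine ⟨1 / (2 * ‖v - y‖) + r / (2 * smoothNorm η (v - w)) + 1 / 2, fun v' => ?_⟩
  have hdist := norm_add_le_norm_add_inner_add (sub_ne_zero.2 hvy) (v' - v)
  have hsmooth := mul_le_mul_of_nonneg_left
    (smoothNorm_add_le (smoothNorm_pos hη (v - w)) (v' - v)) hr
  have hsq := norm_add_sq_real (v - w) (v' - v)
  rw [sub_add_sub_cancel'] at hdist hsmooth hsq
  simp only [localPenalty, inner_add_left, real_inner_smul_left] at hdist hsmooth ⊢
  rw [hsq]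
  linear_combination hdist + hsmooth

lemma exists_mem_proxNormalCone_near [ProperSpace E] (hX : IsClosed X) (hy : y ∉ X) (hw : w ∈ X)
    (hr : 0 ≤ r) {ε : ℝ} (hε : 0 < ε)
    (hgrowth : ∀ᶠ v in 𝓝[X] w, ‖w - y‖ - ‖v - y‖ ≤ r * ‖v - w‖) :
    ∃ v ∈ X, ‖v - w‖ ≤ ε ∧ ∃ q ∈ proxNormalCone X v, ‖‖v - y‖⁻¹ • (v - y) + q‖ ≤ r + ε := by
  obtain ⟨δ, hδ, hball⟩ := Metric.mem_nhdsWithin_iff.1 hgrowth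
  set ρ := min ε (δ / 2)
  have hρ : 0 < ρ := lt_min hε (half_pos hδ)
  set η := ρ ^ 2 / (2 * (r + 1))
  have hη : 0 < η := by positivity
  have hsmall : 2 * r * η < ρ ^ 2 := by
    have h : 2 * r * η = ρ ^ 2 * (r / (r + 1)) := by simp only [η]; field_simp
    rw [h]
    exact mul_lt_of_lt_one_right (by positivity) ((div_lt_one (by positivity)).2 (by linarith))
  obtain ⟨v, hvX, hvw, hmin⟩ := exists_isLocalMinOn_localPenalty hX hw hr hη.le hρ
    (fun v hvX hvρ => hball ⟨by rw [mem_ball, dist_eq_norm]; linarith [min_le_right ε (δ / 2)],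
      hvX⟩) hsmall
  have hvρ : ‖v - w‖ ≤ ρ :=
    (pow_le_pow_iff_left₀ (norm_nonneg _) hρ.le two_ne_zero).1 (by linarith)
  obtain ⟨C, hC⟩ := localPenalty_le_add_inner (w := w) hr hη.ne' (ne_of_mem_of_not_mem hvX hy)
  refine ⟨v, hvX, hvρ.trans (min_le_left _ _), _, hmin.neg_mem_proxNormalCone hvX hC, ?_⟩
  set s := smoothNorm η (v - w)
  have hs : 0 < s := smoothNorm_pos hη.ne' _
  have hunit : s⁻¹ * ‖v - w‖ ≤ 1 := by
    rw [inv_mul_le_iff₀ hs, mul_one]; exact norm_le_smoothNorm η (v - w)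
  calc ‖‖v - y‖⁻¹ • (v - y) + -(‖v - y‖⁻¹ • (v - y) + r • s⁻¹ • (v - w) + (v - w))‖
      = ‖r • s⁻¹ • (v - w) + (v - w)‖ := by rw [← norm_neg]; congr 1; abel
    _ ≤ r * (s⁻¹ * ‖v - w‖) + ‖v - w‖ := by
        refine (norm_add_le _ _).trans_eq ?_
        rw [norm_smul, norm_smul, Real.norm_of_nonneg hr, Real.norm_of_nonneg (inv_nonneg.2 hs.le)]
    _ ≤ r + ε := by
        nlinarith [mul_le_mul_of_nonneg_left hunit hr, min_le_left ε (δ / 2)]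

end Penalty

section LimitingSlope

variable {E : Type*} [NormedAddCommGroup E] [InnerProductSpace ℝ E] {X : Set E} {x y : E}

/-- Outer semicontinuity of the proximal normal cone, combined with Bolzano–Weierstrass. -/
lemma exists_mem_limNormalCone_norm_add_le [ProperSpace E] {g : E → E} (hg : ContinuousAt g x)
    {r : ℝ} (h : ∀ ε > 0, ∃ v ∈ X, dist v x < ε ∧ ∃ q ∈ proxNormalCone X v, ‖g v + q‖ ≤ r + ε) :
    ∃ p ∈ limNormalCone X x, ‖g x + p‖ ≤ r := by
  choose v hvX hvx q hq hqr using fun k : ℕ => h (1 / (k + 1)) Nat.one_div_pos_of_nat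
  have hv : Tendsto v atTop (𝓝 x) := tendsto_iff_dist_tendsto_zero.2 <|
    squeeze_zero (fun _ => dist_nonneg) (fun k => (hvx k).le) tendsto_one_div_add_atTop_nhds_zero_nat
  have hgv : Tendsto (g ∘ v) atTop (𝓝 (g x)) := hg.tendsto.comp hv
  obtain ⟨B, hB⟩ := isBounded_iff_forall_norm_le.1 (isBounded_range_of_tendsto _ hgv)
  have hqB : ∀ k, q k ∈ closedBall 0 (r + 1 + B) := fun k => by
    have hk : 1 / ((k : ℝ) + 1) ≤ 1 := by
      rw [div_le_one (by positivity)]; linarith [(k.cast_nonneg : (0 : ℝ) ≤ k)]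
    rw [mem_closedBall_zero_iff]
    calc ‖q k‖ = ‖(g (v k) + q k) - g (v k)‖ := by rw [add_sub_cancel_left]
      _ ≤ ‖g (v k) + q k‖ + ‖g (v k)‖ := norm_sub_le _ _
      _ ≤ r + 1 + B := by linarith [hqr k, (hB _ (mem_range_self k) : ‖g (v k)‖ ≤ B)]
  obtain ⟨p, -, φ, hφ, hqφ⟩ := tendsto_subseq_of_bounded isBounded_closedBall hqB
  refine ⟨p, ⟨v ∘ φ, q ∘ φ, fun k => hq _, fun k => hvX _, hv.comp hφ.tendsto_atTop, hqφ⟩, ?_⟩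
  have hbound := (tendsto_const_nhds (x := r)).add
    ((tendsto_one_div_add_atTop_nhds_zero_nat (𝕜 := ℝ)).comp hφ.tendsto_atTop)
  simpa using le_of_tendsto_of_tendsto' ((hgv.comp hφ.tendsto_atTop).add hqφ).norm hbound
    fun k => hqr (φ k)

lemma continuousAt_inv_norm_sub_smul_sub (hxy : x ≠ y) :
    ContinuousAt (fun w => ‖w - y‖⁻¹ • (w - y)) x :=
  ((continuousAt_id.sub continuousAt_const).norm.inv₀
    (norm_ne_zero_iff.2 (sub_ne_zero.2 hxy))).smul (continuousAt_id.sub continuousAt_const)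

lemma liminf_slop_restrictedDist_le_infEDist (hxy : x ≠ y) :
    liminf (slop (restrictedDist X y)) (𝓝[X] x) ≤
      infEDist (‖x - y‖⁻¹ • (x - y)) (-limNormalCone X x) := by
  refine le_infEDist.2 fun b hb => ?_
  obtain ⟨xs, qs, hq, hxsX, hxs, hqs⟩ := Set.mem_neg.1 hb
  have hxs' : Tendsto xs atTop (𝓝[X] x) := tendsto_nhdsWithin_iff.2 ⟨hxs, .of_forall hxsX⟩
  have hlim : Tendsto (fun n => ENNReal.ofReal ‖‖xs n - y‖⁻¹ • (xs n - y) + qs n‖) atTop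
      (𝓝 (edist (‖x - y‖⁻¹ • (x - y)) b)) := by
    rw [edist_dist, dist_eq_norm, sub_eq_add_neg]
    exact ENNReal.continuous_ofReal.continuousAt.tendsto.comp
      (((continuousAt_inv_norm_sub_smul_sub hxy).tendsto.comp hxs).add hqs).norm
  calc liminf (slop (restrictedDist X y)) (𝓝[X] x)
      ≤ liminf (slop (restrictedDist X y) ∘ xs) atTop := hxs'.liminf_le_liminf_comp
    _ ≤ liminf (fun n => ENNReal.ofReal ‖‖xs n - y‖⁻¹ • (xs n - y) + qs n‖) atTop :=
        liminf_le_liminf (.of_forall fun n => slop_restrictedDist_le (hxsX n) (hq n))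
    _ = edist (‖x - y‖⁻¹ • (x - y)) b := hlim.liminf_eq

lemma infEDist_le_liminf_slop_restrictedDist [ProperSpace E] (hX : IsClosed X) (hy : y ∉ X)
    (hxy : x ≠ y) :
    infEDist (‖x - y‖⁻¹ • (x - y)) (-limNormalCone X x) ≤
      liminf (slop (restrictedDist X y)) (𝓝[X] x) := by
  refine le_of_forall_gt_imp_ge_of_dense fun c hc => ?_
  rcases eq_or_ne c ⊤ with rfl | hctop
  · exact le_top
  rw [← ENNReal.ofReal_toReal hctop] at hc ⊢
  set r := c.toReal
  have hr : 0 < r := ENNReal.ofReal_pos.1 (pos_of_gt hc)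
  have hfreq : ∃ᶠ w in 𝓝[X] x, slop (restrictedDist X y) w < ENNReal.ofReal r :=
    frequently_lt_of_liminf_lt (by isBoundedDefault) hc
  obtain ⟨p, hp, hpr⟩ := exists_mem_limNormalCone_norm_add_le (r := r)
    (continuousAt_inv_norm_sub_smul_sub hxy) fun ε hε => by
      obtain ⟨w, hwslop, hwX, hwx⟩ := (hfreq.and_eventually
        (inter_mem_nhdsWithin X (ball_mem_nhds x (half_pos hε)))).exists
      obtain ⟨v, hvX, hvw, q, hq, hqr⟩ := exists_mem_proxNormalCone_near hX hy hwX hr.le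
        (half_pos hε) (eventually_restrictedDist_growth_of_slop_lt hwX hwslop)
      refine ⟨v, hvX, ?_, q, hq, by linarith⟩
      calc dist v x ≤ dist v w + dist w x := dist_triangle _ _ _
        _ < ε := by rw [dist_eq_norm]; linarith [mem_ball.1 hwx]
  calc infEDist (‖x - y‖⁻¹ • (x - y)) (-limNormalCone X x)
      ≤ edist (‖x - y‖⁻¹ • (x - y)) (-p) := infEDist_le_edist_of_mem (neg_mem_neg.2 hp)
    _ = ENNReal.ofReal ‖‖x - y‖⁻¹ • (x - y) + p‖ := by
        rw [edist_dist, dist_eq_norm, sub_neg_eq_add]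
    _ ≤ ENNReal.ofReal r := ENNReal.ofReal_le_ofReal hpr

end LimitingSlope

theorem limSlope_of_restricted_distance {E : Type*} [NormedAddCommGroup E]
    [InnerProductSpace ℝ E] [FiniteDimensional ℝ E] (X : Set E) (hX : IsClosed X)
    (x y : E) (hx : x ∈ X) (hy : y ∉ X) :
    limSlope (fun w => (‖w - y‖ : EReal) + eindicator X w) x =
        EMetric.infEdist (‖x - y‖⁻¹ • (x - y)) (-(limNormalCone X x)) ∧
    limSlope (fun w => (‖w - y‖ : EReal) + eindicator X w) x =
        EMetric.infEdist (‖y - x‖⁻¹ • (y - x)) (limNormalCone X x) := by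
  have hxy : x ≠ y := ne_of_mem_of_not_mem hx hy
  have hslope : limSlope (fun w => (‖w - y‖ : EReal) + eindicator X w) x =
      liminf (slop (restrictedDist X y)) (𝓝[X] x) :=
    limSlope_add_eindicator (h := fun w => ‖w - y‖) hx
      (continuous_id.sub continuous_const).norm.continuousWithinAt
  have hmain := hslope.trans <| le_antisymm (liminf_slop_restrictedDist_le_infEDist hxy)
    (infEDist_le_liminf_slop_restrictedDist hX hy hxy)
  refine ⟨hmain, hmain.trans ?_⟩
  rw [← infEDist_neg, ← smul_neg, neg_sub, norm_sub_rev]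
  -- `EMetric.infEdist` is a deprecated alias of `Metric.infEDist`, equal only by unfolding
  rfl
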